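/- Let H be a complex Hilbert space, let V : H → H be a pure isometry, and let f, g ∈ H satisfy V*g + ⟨g,f⟩g = 0. Then V + f⊗g is analytic, i.e., ⋂_{n≥0} (V + f⊗g)ⁿ(H) = {0}. -/

import Mathlib

/-! If `T = V + f ⊗ g` with `V*g = -⟨g,f⟩ g`, then `⟨T h, g⟩ = ⟨h, V*g + ⟨g,f⟩ g⟩ = 0`, so the
perturbation `f ⊗ g` vanishes on the range of `T`. Hence `T` agrees with `V` on its own range,
`Tᵏ⁺¹ = Vᵏ T`, and every vector in the range of all powers of `T` lies in the range of all
powers of `V`, which is `{0}` for a pure isometry. -/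

open ContinuousLinearMap

/-- The rank-one operator `f ⊗ g : h ↦ ⟨h, g⟩ f` (inner product linear in the
first argument, i.e. `⟪g, h⟫ • f` in Mathlib's convention). -/
noncomputable def rankOne {H : Type*} [NormedAddCommGroup H] [InnerProductSpace ℂ H]
    (f g : H) : H →L[ℂ] H :=
  (innerSL ℂ g).smulRight f

section Iterate

variable {α : Type*} {f g : α → α}

theorem iterate_succ_apply_eq_of_eqOn_range (h : Set.EqOn f g (Set.range f)) (k : ℕ) (x : α) :
    f^[k + 1] x = g^[k] (f x) := by
  induction k generalizing x with
  | zero => rfl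
  | succ k ih =>
    rw [Function.iterate_succ_apply, ih, h (Set.mem_range_self x), Function.iterate_succ_apply]

theorem iInter_range_iterate_subset_of_eqOn_range (h : Set.EqOn f g (Set.range f)) :
    ⋂ k : ℕ, Set.range f^[k] ⊆ ⋂ k : ℕ, Set.range g^[k] := by
  refine Set.subset_iInter fun k => ?_
  rintro _ hx
  obtain ⟨x, rfl⟩ := Set.mem_iInter.1 hx (k + 1)
  exact ⟨f x, (iterate_succ_apply_eq_of_eqOn_range h k x).symm⟩

end Iterate

section RankOne

variable {H : Type*} [NormedAddCommGroup H] [InnerProductSpace ℂ H]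

theorem rankOne_apply (f g h : H) : rankOne f g h = (inner ℂ g h : ℂ) • f := rfl

variable [CompleteSpace H] {V : H →L[ℂ] H} {f g : H}

theorem inner_add_rankOne_apply_eq_zero (hfg : adjoint V g + (inner ℂ f g : ℂ) • g = 0)
    (h : H) : inner ℂ g ((V + rankOne f g) h) = 0 := by
  have hVg : adjoint V g = -((inner ℂ f g : ℂ) • g) := eq_neg_of_add_eq_zero_left hfg
  rw [add_apply, rankOne_apply, inner_add_right, inner_smul_right, ← adjoint_inner_left, hVg,
    inner_neg_left, inner_smul_left, inner_conj_symm]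
  ring

theorem eqOn_range_add_rankOne (hfg : adjoint V g + (inner ℂ f g : ℂ) • g = 0) :
    Set.EqOn (V + rankOne f g) V (Set.range (V + rankOne f g)) := by
  rintro _ ⟨h, rfl⟩
  show V _ + rankOne f g _ = V _
  rw [rankOne_apply, inner_add_rankOne_apply_eq_zero hfg, zero_smul, add_zero]

end RankOne

theorem analytic_of_kernel_condition_general
    {H : Type*} [NormedAddCommGroup H] [InnerProductSpace ℂ H] [CompleteSpace H]
    (V : H →L[ℂ] H)
    (hpure : (⋂ k : ℕ, Set.range ⇑(V ^ k)) = {0})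
    (f g : H) (hfg : adjoint V g + (inner ℂ f g : ℂ) • g = 0) :
    (⋂ k : ℕ, Set.range ⇑((V + rankOne f g) ^ k)) = {0} := by
  refine subset_antisymm ?_ ?_
  · rw [← hpure]
    simpa only [FunLike.coe_pow_eq_iterate] using
      iInter_range_iterate_subset_of_eqOn_range (eqOn_range_add_rankOne hfg)
  · exact Set.singleton_subset_iff.2 (Set.mem_iInter.2 fun k => ⟨0, map_zero _⟩)

/-- **Proposition.** If `V` is a pure isometry and `V*g + ⟨g,f⟩g = 0` (inner
product linear in the first argument, so `⟨g,f⟩ = ⟪f,g⟫` in Mathlib's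
convention), then `V + f ⊗ g` is analytic. -/
theorem analytic_of_kernel_condition
    {H : Type*} [NormedAddCommGroup H] [InnerProductSpace ℂ H] [CompleteSpace H]
    (V : H →L[ℂ] H) (hV : (adjoint V) ∘L V = 1)
    (hpure : (⋂ k : ℕ, Set.range ⇑(V ^ k)) = {0})
    (f g : H) (hfg : adjoint V g + (inner ℂ f g : ℂ) • g = 0) :
    (⋂ k : ℕ, Set.range ⇑((V + rankOne f g) ^ k)) = {0} :=
  analytic_of_kernel_condition_general V hpure f g hfg
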